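/- arXiv:2211.01828 — 2 statements merged into one kernel-verified Lean document; each statement's English description precedes it below -/
import Mathlib

section
/- Let c ∈ ℝ and p_n = (log n + c)/n. Suppose (τ_n) is a sequence of integers with τ_n = n + O(√n) (i.e. (τ_n - n)/√n is bounded). Then n·(1 - p_n)^{τ_n} → e^{-c} as n → ∞, and hence exp(-n(1 - p_n)^{τ_n}) → e^{-e^{-c}}. -/
/-! Write `x_n = (log n + c)/n`, so that `n x_n = log n + c`. Then
`log (n (1 - x_n)^{τ_n}) = -c + τ_n (log (1 - x_n) + x_n) - (τ_n - n) x_n`.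
Since `log (1 - x) + x = O(x²)` and `τ_n x_n² ≈ (log n)²/n → 0`, the middle term vanishes in
the limit, and so does the last one because `|τ_n - n| x_n ≤ C (log n + c)/√n`. -/

open Filter Real Topology Asymptotics

theorem Real.abs_log_one_sub_add_self_le {x : ℝ} (hx : |x| ≤ 1 / 2) :
    |log (1 - x) + x| ≤ 2 * x ^ 2 := by
  have h := abs_log_sub_add_sum_range_le (hx.trans_lt (by norm_num)) 1
  simp only [Finset.range_one, Finset.sum_singleton, zero_add, pow_one, Nat.cast_zero,
    div_one] at h
  calc |log (1 - x) + x| = |x + log (1 - x)| := by rw [add_comm]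
    _ ≤ |x| ^ 2 / (1 - |x|) := h
    _ ≤ |x| ^ 2 / (1 / 2) := by gcongr; linarith
    _ = 2 * x ^ 2 := by rw [sq_abs]; ring

theorem tendsto_mul_log_one_sub_add_mul {α : Type*} {l : Filter α} {x t : α → ℝ}
    (hx : Tendsto x l (𝓝 0)) (htx : Tendsto (fun a => t a * x a ^ 2) l (𝓝 0)) :
    Tendsto (fun a => t a * log (1 - x a) + t a * x a) l (𝓝 0) := by
  have hsmall : ∀ᶠ a in l, |x a| ≤ 1 / 2 :=
    hx.abs.eventually_le_const (by norm_num : |(0 : ℝ)| < 1 / 2)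
  have hbound : ∀ᶠ a in l, ‖t a * log (1 - x a) + t a * x a‖ ≤ 2 * |t a * x a ^ 2| := by
    filter_upwards [hsmall] with a ha
    rw [Real.norm_eq_abs, ← mul_add, abs_mul, abs_mul, abs_of_nonneg (sq_nonneg (x a))]
    nlinarith [Real.abs_log_one_sub_add_self_le ha, abs_nonneg (t a)]
  simpa using squeeze_zero_norm' hbound (by simpa using htx.abs.const_mul 2)

theorem tendsto_log_add_const_div_rpow_atTop (c : ℝ) {r : ℝ} (hr : 0 < r) :
    Tendsto (fun y => (log y + c) / y ^ r) atTop (𝓝 0) := by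
  have hc : (fun _ => c) =o[atTop] fun y : ℝ => y ^ r :=
    isLittleO_const_left.2 <| Or.inr <| tendsto_norm_atTop_atTop.comp (tendsto_rpow_atTop hr)
  exact ((isLittleO_log_rpow_atTop hr).add hc).tendsto_div_nhds_zero

theorem tendsto_log_natCast_add_const_div_rpow (c : ℝ) {r : ℝ} (hr : 0 < r) :
    Tendsto (fun n : ℕ => (log n + c) / (n : ℝ) ^ r) atTop (𝓝 0) :=
  (tendsto_log_add_const_div_rpow_atTop c hr).comp tendsto_natCast_atTop_atTop

theorem tendsto_sub_mul_div_of_abs_sub_le_mul_sqrt {τ f : ℕ → ℝ} {C : ℝ}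
    (hτ : ∀ n : ℕ, |τ n - n| ≤ C * √n) (hf : Tendsto (fun n : ℕ => f n / √n) atTop (𝓝 0)) :
    Tendsto (fun n : ℕ => (τ n - n) * (f n / n)) atTop (𝓝 0) := by
  have hbound : ∀ n : ℕ, ‖(τ n - n) * (f n / n)‖ ≤ C * |f n / √n| := fun n => by
    calc ‖(τ n - n) * (f n / n)‖ = |τ n - n| * (|f n| / n) := by
          rw [Real.norm_eq_abs, abs_mul, abs_div, Nat.abs_cast]
      _ ≤ C * √n * (|f n| / n) := by gcongr; exact hτ n
      _ = C * |f n / √n| := by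
          rw [abs_div, abs_of_nonneg (sqrt_nonneg _), mul_assoc, mul_div_left_comm,
            ← mul_div_assoc, mul_div_assoc, sqrt_div_self', mul_one_div]
  simpa using squeeze_zero_norm hbound (by simpa using hf.abs.const_mul C)

theorem tendsto_natCast_mul_one_sub_log_add_const_div_pow (c : ℝ) (τ : ℕ → ℕ) {C : ℝ}
    (hτ : ∀ n : ℕ, |(τ n : ℝ) - n| ≤ C * √n) :
    Tendsto (fun n : ℕ => (n : ℝ) * (1 - (log n + c) / n) ^ (τ n)) atTop (𝓝 (exp (-c))) := by
  set x : ℕ → ℝ := fun n => (log n + c) / n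
  have hx : Tendsto x atTop (𝓝 0) := by
    simpa only [rpow_one] using tendsto_log_natCast_add_const_div_rpow c one_pos
  have hu : Tendsto (fun n : ℕ => (log n + c) / √n) atTop (𝓝 0) := by
    simpa only [sqrt_eq_rpow] using tendsto_log_natCast_add_const_div_rpow c one_half_pos
  have hdev := tendsto_sub_mul_div_of_abs_sub_le_mul_sqrt hτ hu
  have hτx : Tendsto (fun n => (τ n : ℝ) * x n ^ 2) atTop (𝓝 0) := by
    -- `τ x² = n x² + ((τ - n) x) x` and `n x² = ((log n + c)/√n)²`
    refine ((hu.pow 2).add (hdev.mul hx)).congr' ?_ |>.trans (by simp)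
    filter_upwards [eventually_gt_atTop 0] with n hn
    have : (0 : ℝ) < n := Nat.cast_pos.2 hn
    simp only [x, div_pow, sq_sqrt this.le]
    field_simp
    ring
  have hlog := ((tendsto_mul_log_one_sub_add_mul hx hτx).sub hdev).sub_const c
  refine ((continuous_exp.tendsto _).comp hlog).congr' ?_ |>.trans (by simp)
  filter_upwards [eventually_gt_atTop 0, hx.eventually_lt_const one_pos] with n hn hx1
  have : (0 : ℝ) < n := Nat.cast_pos.2 hn
  calc exp ((τ n : ℝ) * log (1 - x n) + τ n * x n - (τ n - n) * x n - c)
      = exp (log n + τ n * log (1 - x n)) := by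
        congr 1
        simp only [x]
        field_simp
        ring
    _ = n * (1 - x n) ^ τ n := by
        rw [exp_add, exp_nat_mul, exp_log this, exp_log (sub_pos.2 hx1)]

/-- For `p_n = (log n + c)/n` and integers `τ_n = n + O(√n)`, we have
`n (1 - p_n)^{τ_n} → e^{-c}` and `exp(-n (1 - p_n)^{τ_n}) → e^{-e^{-c}}`. -/
theorem connectedness_limit (c : ℝ) (τ : ℕ → ℕ)
    (hτ : ∃ C : ℝ, ∀ n : ℕ, |(τ n : ℝ) - n| ≤ C * Real.sqrt n) :
    Tendsto (fun n : ℕ => (n : ℝ) * (1 - (Real.log n + c) / n) ^ (τ n))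
      atTop (nhds (Real.exp (-c))) ∧
    Tendsto (fun n : ℕ => Real.exp (-((n : ℝ) * (1 - (Real.log n + c) / n) ^ (τ n))))
      atTop (nhds (Real.exp (-Real.exp (-c)))) := by
  obtain ⟨C, hC⟩ := hτ
  have h := tendsto_natCast_mul_one_sub_log_add_const_div_pow c τ hC
  exact ⟨h, ((continuous_exp.comp continuous_neg).tendsto _).comp h⟩
end

section
/- Let (N(t))_{t≥0} be a unit-rate Poisson counting process, c > 0, and define S^{(n)}_k = N(n(1 - (1 - c/n)^k)) - k. Then for every T > 0 and ε > 0, P( sup_{0 ≤ t ≤ T} | S^{(n)}_{⌊nt⌋}/n - (1 - e^{-ct} - t) | > ε ) → 0 as n → ∞. -/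
/-!
Put `a = n (1 - (1 - c/n)^⌊nt⌋)`. Since `(1 - c/n)^⌊nt⌋ = e^{-ct} + O(1/n)` uniformly for
`t ∈ [0, T]`, the rescaled walk differs from the fluid limit by `(N(a) - a)/n + O(1/n)`, and
`0 ≤ a ≤ n`; so it suffices that `sup_{0 ≤ a ≤ n} |N(a) - a| / n → 0` in probability. As `N` is
nondecreasing, its deviation on `[0, n]` exceeds its largest deviation on a grid of mesh `δn` by at
most `δn`, and at each of the `O(1/δ)` grid points Chebyshev's inequality with `Var N(a) = a ≤ n`
bounds the probability of a deviation `δn` by `1/(δ²n)`.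
-/

open MeasureTheory ProbabilityTheory Filter Real

open scoped NNReal ENNReal Nat

namespace ProbabilityTheory

lemma poisson_succ_mul (r : ℝ≥0) (n : ℕ) :
    exp (-r) * r ^ (n + 1) / (n + 1)! * (n + 1) = r * (exp (-r) * r ^ n / n !) := by
  push_cast [Nat.factorial_succ]
  field_simp
  ring

lemma HasSum.poisson_mul_natCast {r : ℝ≥0} {g : ℕ → ℝ} {a : ℝ}
    (h : HasSum (fun n ↦ exp (-r) * r ^ n / n ! * g n) a) :
    HasSum (fun n : ℕ ↦ exp (-r) * r ^ n / n ! * (n * g (n - 1))) (r * a) := by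
  refine (hasSum_nat_add_iff' 1).mp ?_
  simpa [← mul_assoc, poisson_succ_mul] using h.mul_left (r : ℝ)

lemma hasSum_poisson_mul_natCast (r : ℝ≥0) :
    HasSum (fun n : ℕ ↦ exp (-r) * r ^ n / n ! * n) r := by
  simpa using ((hasSum_one_poissonMeasure r).mul_right 1).poisson_mul_natCast

lemma hasSum_poisson_mul_descFactorial_two (r : ℝ≥0) :
    HasSum (fun n : ℕ ↦ exp (-r) * r ^ n / n ! * (n * (n - 1))) (r ^ 2) := by
  convert (hasSum_poisson_mul_natCast r).poisson_mul_natCast using 2 with n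
  · rcases n with _ | n <;> simp
  · ring

lemma hasSum_poisson_mul_sub_sq (r : ℝ≥0) :
    HasSum (fun n : ℕ ↦ exp (-r) * r ^ n / n ! * (n - r) ^ 2) r := by
  convert (hasSum_poisson_mul_descFactorial_two r).add
    (((hasSum_poisson_mul_natCast r).mul_left (1 - 2 * (r : ℝ))).add
      ((hasSum_one_poissonMeasure r).mul_left ((r : ℝ) ^ 2))) using 1
  · ext n; ring
  · ring

lemma integral_natCast_poissonMeasure (r : ℝ≥0) : ∫ n, (n : ℝ) ∂poissonMeasure r = r := by
  simpa [integral_poissonMeasure] using (hasSum_poisson_mul_natCast r).tsum_eq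

lemma memLp_natCast_poissonMeasure (r : ℝ≥0) :
    MemLp (fun n : ℕ ↦ (n : ℝ)) 2 (poissonMeasure r) := by
  refine (memLp_two_iff_integrable_sq .of_discrete).2 (integrable_poissonMeasure_iff.2 ?_)
  convert ((hasSum_poisson_mul_descFactorial_two r).add
    (hasSum_poisson_mul_natCast r)).summable using 2 with n
  simp only [norm_pow, Real.norm_natCast]
  ring

lemma variance_natCast_poissonMeasure (r : ℝ≥0) :
    variance (fun n : ℕ ↦ (n : ℝ)) (poissonMeasure r) = r := by
  rw [variance_eq_integral Measurable.of_discrete.aemeasurable, integral_natCast_poissonMeasure,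
    integral_poissonMeasure]
  simpa using (hasSum_poisson_mul_sub_sq r).tsum_eq

lemma poissonMeasure_abs_sub_ge_le (r : ℝ≥0) {a : ℝ} (ha : 0 < a) :
    poissonMeasure r {n | a ≤ |(n : ℝ) - r|} ≤ ENNReal.ofReal (r / a ^ 2) := by
  simpa [integral_natCast_poissonMeasure, variance_natCast_poissonMeasure] using
    meas_ge_le_variance_div_sq (memLp_natCast_poissonMeasure r) ha

end ProbabilityTheory

lemma measure_preimage_le_of_measure_preimage_singleton {Ω α : Type*} [MeasurableSpace Ω]
    [MeasurableSpace α] [Countable α] [MeasurableSingletonClass α] {μ : Measure Ω}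
    {ν : Measure α} {X : Ω → α} (hX : ∀ a, μ (X ⁻¹' {a}) = ν {a}) (s : Set α) :
    μ (X ⁻¹' s) ≤ ν s :=
  calc μ (X ⁻¹' s) = μ (⋃ a ∈ s, X ⁻¹' {a}) := by rw [Set.biUnion_preimage_singleton]
    _ ≤ ∑' a : s, μ (X ⁻¹' {(a : α)}) := measure_biUnion_le μ s.to_countable _
    _ = ν s := by
      simp_rw [hX]
      exact tsum_measure_preimage_singleton s.to_countable (f := id) fun _ _ ↦ .of_discrete

lemma abs_sub_le_max_add_of_monotone {f : ℝ → ℝ} (hf : Monotone f) {a b x : ℝ} (hax : a ≤ x)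
    (hxb : x ≤ b) : |f x - x| ≤ max |f a - a| |f b - b| + (b - a) := by
  have hfa := hf hax
  have hfb := hf hxb
  rw [abs_le]
  constructor
  · linarith [neg_abs_le (f a - a), le_max_left |f a - a| |f b - b|]
  · linarith [le_abs_self (f b - b), le_max_right |f a - a| |f b - b|]

lemma measure_abs_sub_ge_le_of_poisson {Ω : Type*} [MeasurableSpace Ω] {μ : Measure Ω}
    {X : Ω → ℕ} {r : ℝ≥0} (hX : ∀ k, μ (X ⁻¹' {k}) = poissonMeasure r {k}) {a : ℝ}
    (ha : 0 < a) : μ {ω | a ≤ |(X ω : ℝ) - r|} ≤ ENNReal.ofReal (r / a ^ 2) :=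
  (measure_preimage_le_of_measure_preimage_singleton hX {n | a ≤ |(n : ℝ) - r|}).trans
    (poissonMeasure_abs_sub_ge_le r ha)

lemma measure_exists_abs_sub_ge_le {Ω : Type*} [MeasurableSpace Ω] {μ : Measure Ω}
    {N : ℝ → Ω → ℕ} (hmono : ∀ ω, Monotone fun s ↦ N s ω)
    (hlaw : ∀ s, 0 ≤ s → ∀ k, μ (N s ⁻¹' {k}) = poissonMeasure s.toNNReal {k})
    {h η : ℝ} (hh : 0 < h) (hη : 0 < η) (m : ℕ) :
    μ {ω | ∃ s ∈ Set.Icc 0 (m * h), η + h ≤ |(N s ω : ℝ) - s|}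
      ≤ (m + 2) * ENNReal.ofReal ((m + 1) * h / η ^ 2) := by
  have hgrid : {ω | ∃ s ∈ Set.Icc 0 (m * h), η + h ≤ |(N s ω : ℝ) - s|}
      ⊆ ⋃ j ∈ Finset.range (m + 2), {ω | η ≤ |(N (j * h) ω : ℝ) - j * h|} := by
    rintro ω ⟨s, ⟨hs₀, hsm⟩, hdev⟩
    set j := ⌊s / h⌋₊
    have hj : j * h ≤ s := (le_div_iff₀ hh).1 (Nat.floor_le (by positivity))
    have hj' : s ≤ (j + 1) * h := (div_le_iff₀ hh).1 (Nat.lt_floor_add_one _).le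
    have hjm : j ≤ m := Nat.floor_le_of_le ((div_le_iff₀ hh).2 hsm)
    have hsandwich := abs_sub_le_max_add_of_monotone (f := fun s ↦ (N s ω : ℝ))
      (fun _ _ hst ↦ Nat.cast_le.2 (hmono ω hst)) hj hj'
    simp only [Set.mem_iUnion, Finset.mem_range]
    rcases le_max_iff.1 (show η ≤ max _ _ by linarith) with hleft | hright
    · exact ⟨j, by omega, hleft⟩
    · exact ⟨j + 1, by omega, by push_cast; exact hright⟩
  calc _ ≤ μ (⋃ j ∈ Finset.range (m + 2), {ω | η ≤ |(N (j * h) ω : ℝ) - j * h|}) :=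
        measure_mono hgrid
    _ ≤ ∑ j ∈ Finset.range (m + 2), μ {ω | η ≤ |(N (j * h) ω : ℝ) - j * h|} :=
        measure_biUnion_finset_le _ _
    _ ≤ ∑ j ∈ Finset.range (m + 2), ENNReal.ofReal ((m + 1) * h / η ^ 2) := by
      refine Finset.sum_le_sum fun j hj ↦ ?_
      have hjh : 0 ≤ (j : ℝ) * h := by positivity
      have hcheb := measure_abs_sub_ge_le_of_poisson (hlaw _ hjh) hη
      rw [Real.coe_toNNReal _ hjh] at hcheb
      refine hcheb.trans (ENNReal.ofReal_le_ofReal ?_)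
      have : (j : ℝ) ≤ m + 1 := by exact_mod_cast Nat.lt_succ_iff.1 (Finset.mem_range.1 hj)
      gcongr
    _ = _ := by simp

lemma abs_one_sub_pow_sub_exp_neg_pow_le {x : ℝ} (hx₀ : 0 ≤ x) (hx₁ : x ≤ 1) (k : ℕ) :
    |(1 - x) ^ k - exp (-x) ^ k| ≤ k * x ^ 2 := by
  have hmax : max |1 - x| |exp (-x)| ≤ 1 := by
    rw [abs_of_nonneg (by linarith), abs_of_pos (exp_pos _)]
    exact max_le (by linarith) (exp_le_one_iff.2 (by linarith))
  have hdiff : |1 - x - exp (-x)| ≤ x ^ 2 := by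
    rw [abs_sub_comm, show exp (-x) - (1 - x) = exp (-x) - 1 - -x by ring, ← neg_sq]
    exact abs_exp_sub_one_sub_id_le (by rw [abs_neg, abs_of_nonneg hx₀]; exact hx₁)
  calc |(1 - x) ^ k - exp (-x) ^ k|
      ≤ |1 - x - exp (-x)| * k * max |1 - x| |exp (-x)| ^ (k - 1) := abs_pow_sub_pow_le ..
    _ ≤ x ^ 2 * k * 1 := by
      gcongr
      exact pow_le_one₀ (by positivity) hmax
    _ = k * x ^ 2 := by ring

lemma abs_exp_neg_sub_exp_neg_le {u v : ℝ} (hu : 0 ≤ u) (huv : u ≤ v) :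
    |exp (-u) - exp (-v)| ≤ v - u := by
  have hsplit : exp (-v) = exp (-u) * exp (-(v - u)) := by rw [← exp_add]; ring_nf
  have h₁ : 1 - (v - u) ≤ exp (-(v - u)) := one_sub_le_exp_neg _
  have h₂ : exp (-(v - u)) ≤ 1 := exp_le_one_iff.2 (by linarith)
  have h₃ : exp (-u) ≤ 1 := exp_le_one_iff.2 (by linarith)
  rw [abs_of_nonneg (by rw [hsplit]; nlinarith [exp_pos (-u)]), hsplit]
  nlinarith [exp_pos (-u)]

lemma abs_one_sub_div_pow_floor_sub_exp_le {c t T : ℝ} {n : ℕ} (hc : 0 ≤ c) (hn : 0 < n)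
    (hcn : c ≤ n) (ht : 0 ≤ t) (htT : t ≤ T) :
    |(1 - c / n) ^ ⌊n * t⌋₊ - exp (-c * t)| ≤ (c ^ 2 * T + c) / n := by
  have hn' : (0 : ℝ) < n := Nat.cast_pos.2 hn
  set k := ⌊n * t⌋₊
  have hk : (k : ℝ) ≤ n * t := Nat.floor_le (by positivity)
  have hk' : n * t < k + 1 := Nat.lt_floor_add_one _
  have hx₀ : 0 ≤ c / n := by positivity
  have hx₁ : c / n ≤ 1 := (div_le_one hn').2 hcn
  have hpow := abs_one_sub_pow_sub_exp_neg_pow_le hx₀ hx₁ k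
  have hexp := abs_exp_neg_sub_exp_neg_le (u := c / n * k) (v := c * t) (by positivity)
    (by rw [div_mul_eq_mul_div, div_le_iff₀ hn']; nlinarith)
  rw [← exp_nat_mul, show (k : ℝ) * -(c / n) = -(c / n * k) by ring] at hpow
  calc |(1 - c / n) ^ k - exp (-c * t)|
      ≤ |(1 - c / n) ^ k - exp (-(c / n * k))| + |exp (-(c / n * k)) - exp (-(c * t))| := by
        rw [neg_mul]; exact abs_sub_le _ _ _
    _ ≤ k * (c / n) ^ 2 + (c * t - c / n * k) := add_le_add hpow hexp
    _ ≤ (c ^ 2 * T + c) / n := by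
      rw [div_pow, le_div_iff₀ hn']
      field_simp
      have hkT : (k : ℝ) ≤ n * T := hk.trans (by gcongr)
      nlinarith [mul_le_mul_of_nonneg_left hkT (sq_nonneg c),
        mul_le_mul_of_nonneg_left hk'.le (mul_nonneg hc hn'.le)]

lemma abs_div_sub_fluid_le {c t T : ℝ} {n : ℕ} (hc : 0 ≤ c) (hn : 0 < n) (hcn : c ≤ n)
    (ht : 0 ≤ t) (htT : t ≤ T) (y : ℝ) :
    |(y - ⌊n * t⌋₊) / n - (1 - exp (-c * t) - t)|
      ≤ (|y - n * (1 - (1 - c / n) ^ ⌊n * t⌋₊)| + (c ^ 2 * T + c + 1)) / n := by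
  have hn' : (0 : ℝ) < n := Nat.cast_pos.2 hn
  set k := ⌊n * t⌋₊
  set a := n * (1 - (1 - c / n) ^ k)
  have hk : (k : ℝ) ≤ n * t := Nat.floor_le (by positivity)
  have hk' : n * t < k + 1 := Nat.lt_floor_add_one _
  have hfloor : |t - k / n| ≤ 1 / n := by
    rw [abs_of_nonneg (by rw [sub_nonneg, div_le_iff₀ hn']; linarith), sub_le_iff_le_add,
      ← add_div, le_div_iff₀ hn']
    linarith
  have hsplit : (y - k) / n - (1 - exp (-c * t) - t)
      = (y - a) / n + -((1 - c / n) ^ k - exp (-c * t)) + (t - k / n) := by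
    simp only [a]; field_simp; ring
  have htriangle := abs_add_three ((y - a) / n) (-((1 - c / n) ^ k - exp (-c * t))) (t - k / n)
  rw [abs_div, abs_of_pos hn', abs_neg] at htriangle
  calc _ ≤ _ := hsplit ▸ htriangle
    _ ≤ |y - a| / n + (c ^ 2 * T + c) / n + 1 / n := by
      gcongr; exact abs_one_sub_div_pow_floor_sub_exp_le hc hn hcn ht htT
    _ = _ := by ring

lemma exists_le_abs_sub_of_fluid_deviation {f : ℝ → ℝ} {c t T δ : ℝ} {n : ℕ} (hc : 0 ≤ c)
    (hn : 0 < n) (hcn : c ≤ n) (hdet : c ^ 2 * T + c + 1 ≤ δ * n) (ht : 0 ≤ t) (htT : t ≤ T)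
    (hdev : 3 * δ < |(f (n * (1 - (1 - c / n) ^ ⌊n * t⌋₊)) - ⌊n * t⌋₊) / n
      - (1 - exp (-c * t) - t)|) :
    ∃ s ∈ Set.Icc 0 (n : ℝ), δ * n + δ * n ≤ |f s - s| := by
  have hn' : (0 : ℝ) < n := Nat.cast_pos.2 hn
  have hq : 0 ≤ 1 - c / n := by rw [sub_nonneg, div_le_one hn']; exact hcn
  have hqk₀ : 0 ≤ (1 - c / n) ^ ⌊n * t⌋₊ := pow_nonneg hq _
  have hqk₁ : (1 - c / n) ^ ⌊n * t⌋₊ ≤ 1 := pow_le_one₀ hq (by linarith [div_nonneg hc hn'.le])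
  refine ⟨n * (1 - (1 - c / n) ^ ⌊n * t⌋₊), ⟨by nlinarith, by nlinarith⟩, ?_⟩
  have hfluid := hdev.trans_le (abs_div_sub_fluid_le hc hn hcn ht htT _)
  rw [lt_div_iff₀ hn'] at hfluid
  linarith

theorem lukasiewicz_fluid_limit_general {Ω : Type*} [MeasurableSpace Ω] (μ : Measure Ω)
    (N : ℝ → Ω → ℕ)
    (h0 : ∀ ω, N 0 ω = 0)
    (hmono : ∀ ω, ∀ s t : ℝ, s ≤ t → N s ω ≤ N t ω)
    (hlaw : ∀ s t : ℝ, 0 ≤ s → s ≤ t → ∀ k : ℕ,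
      μ {ω | N t ω - N s ω = k} = ENNReal.ofReal (poissonPMFReal (Real.toNNReal (t - s)) k))
    (c : ℝ) (hc : 0 < c)
    (S : ℕ → ℕ → Ω → ℝ)
    (hS : ∀ n k ω, S n k ω = (N ((n : ℝ) * (1 - (1 - c / n) ^ k)) ω : ℝ) - k)
    (T ε : ℝ) (hε : 0 < ε) :
    Tendsto (fun n : ℕ =>
        μ {ω | ∃ t ∈ Set.Icc (0 : ℝ) T,
            ε < |S n ⌊(n : ℝ) * t⌋₊ ω / n - (1 - Real.exp (-c * t) - t)|})
      atTop (nhds 0) := by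
  have hlaw₀ : ∀ s, 0 ≤ s → ∀ k, μ (N s ⁻¹' {k}) = poissonMeasure s.toNNReal {k} := by
    intro s hs k
    have h := hlaw 0 s le_rfl hs k
    simp only [h0, Nat.sub_zero, sub_zero] at h
    exact h.trans (poissonMeasure_singleton _ _).symm
  set δ := ε / 3
  have hδ : 0 < δ := by positivity
  set m := ⌈1 / δ⌉₊
  have hbound : ∀ᶠ n : ℕ in atTop,
      μ {ω | ∃ t ∈ Set.Icc (0 : ℝ) T,
          ε < |S n ⌊(n : ℝ) * t⌋₊ ω / n - (1 - Real.exp (-c * t) - t)|}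
        ≤ (m + 2) * ENNReal.ofReal ((m + 1) * (δ * n) / (δ * n) ^ 2) := by
    filter_upwards [eventually_gt_atTop 0, tendsto_natCast_atTop_atTop.eventually_ge_atTop c,
      tendsto_natCast_atTop_atTop.eventually_ge_atTop ((c ^ 2 * T + c + 1) / δ)]
      with n hn hcn hdet
    have hmesh : (n : ℝ) ≤ m * (δ * n) := by
      nlinarith [(div_le_iff₀ hδ).1 (Nat.le_ceil (1 / δ)), (n.cast_nonneg : (0 : ℝ) ≤ n)]
    refine (measure_mono ?_).trans (measure_exists_abs_sub_ge_le (fun ω _ _ ↦ hmono ω _ _) hlaw₀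
      (by positivity) (by positivity) m)
    rintro ω ⟨t, ⟨ht₀, htT⟩, hdev⟩
    rw [hS, show ε = 3 * δ by ring] at hdev
    obtain ⟨s, ⟨hs₀, hsn⟩, hs⟩ := exists_le_abs_sub_of_fluid_deviation (f := fun s ↦ (N s ω : ℝ)) hc.le hn hcn
      ((div_le_iff₀' hδ).1 hdet) ht₀ htT hdev
    exact ⟨s, ⟨hs₀, hsn.trans hmesh⟩, hs⟩
  have hlim : Tendsto (fun n : ℕ ↦ (m + 2) * ENNReal.ofReal ((m + 1) * (δ * n) / (δ * n) ^ 2))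
      atTop (nhds 0) := by
    have hreal : Tendsto (fun n : ℕ ↦ (m + 1) * (δ * n) / (δ * n) ^ 2) atTop (nhds 0) := by
      refine (tendsto_const_div_atTop_nhds_zero_nat ((m + 1) / δ)).congr' ?_
      filter_upwards [eventually_gt_atTop 0] with n hn
      field_simp
    simpa using ENNReal.Tendsto.const_mul (ENNReal.tendsto_ofReal hreal) (Or.inr (by finiteness))
  exact tendsto_of_tendsto_of_tendsto_of_le_of_le' tendsto_const_nhds hlim
    (Eventually.of_forall fun _ ↦ zero_le) hbound

/-- Fluid limit for the Lukasiewicz exploration walk of `G_Poi(n, c/n)`: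
with `S⁽ⁿ⁾_k = N(n(1 - (1-c/n)^k)) - k` for a unit-rate Poisson counting process `N`,
for every `T > 0` and `ε > 0`,
`P(sup_{0≤t≤T} |S⁽ⁿ⁾_{⌊nt⌋}/n - (1 - e^{-ct} - t)| > ε) → 0` as `n → ∞`. -/
theorem lukasiewicz_fluid_limit {Ω : Type*} [MeasurableSpace Ω] (μ : Measure Ω)
    [IsProbabilityMeasure μ] (N : ℝ → Ω → ℕ)
    (h0 : ∀ ω, N 0 ω = 0)
    (hmono : ∀ ω, ∀ s t : ℝ, s ≤ t → N s ω ≤ N t ω)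
    (hlaw : ∀ s t : ℝ, 0 ≤ s → s ≤ t → ∀ k : ℕ,
      μ {ω | N t ω - N s ω = k} = ENNReal.ofReal (poissonPMFReal (Real.toNNReal (t - s)) k))
    (hindep : ∀ (n : ℕ) (t : Fin (n + 1) → ℝ), Monotone t → (∀ i, 0 ≤ t i) →
      iIndepFun
        (fun (i : Fin n) (ω : Ω) => N (t i.succ) ω - N (t i.castSucc) ω) μ)
    (c : ℝ) (hc : 0 < c)
    (S : ℕ → ℕ → Ω → ℝ)
    (hS : ∀ n k ω, S n k ω = (N ((n : ℝ) * (1 - (1 - c / n) ^ k)) ω : ℝ) - k)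
    (T ε : ℝ) (hT : 0 < T) (hε : 0 < ε) :
    Tendsto (fun n : ℕ =>
        μ {ω | ∃ t ∈ Set.Icc (0 : ℝ) T,
            ε < |S n ⌊(n : ℝ) * t⌋₊ ω / n - (1 - Real.exp (-c * t) - t)|})
      atTop (nhds 0) :=
  lukasiewicz_fluid_limit_general μ N h0 hmono hlaw c hc S hS T ε hε
end
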